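/- Let q ∈ ℂ[z] with q(0) = 0, and for each n set P_n = Σ_{j=0}^n q(G)^j(φ_n)/j! (the sum is exhaustive since q(G) lowers degree). Then P_n is a monic polynomial of degree n and is an eigenfunction of the difference operator L := q′(G)∘G − x∇ = q′(G)∘G + H with eigenvalue n, i.e., L(P_n) = n·P_n for all n ≥ 0. -/
import Mathlib


open Polynomial

/-- Pochhammer symbol `(a)_j = a(a+1)⋯(a+j−1)`. -/
noncomputable def poch (a : ℂ) (j : ℕ) : ℂ := ∏ s ∈ Finset.range j, (a + s)

/-- Multiplication by `x` on `ℂ[x]`. -/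
noncomputable def Xop : Module.End ℂ (Polynomial ℂ) := LinearMap.mulLeft ℂ Polynomial.X

/-- The shift operator `f(x) ↦ f(x + c)` on `ℂ[x]`. -/
noncomputable def shiftOp (c : ℂ) : Module.End ℂ (Polynomial ℂ) :=
  (Polynomial.aeval (Polynomial.X + Polynomial.C c) :
    Polynomial ℂ →ₐ[ℂ] Polynomial ℂ).toLinearMap

/-- `(Δf)(x) = f(x+1) − f(x)`. -/
noncomputable def Delt : Module.End ℂ (Polynomial ℂ) := shiftOp 1 - 1

/-- `(∇f)(x) = f(x−1) − f(x)`. -/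
noncomputable def Nabl : Module.End ℂ (Polynomial ℂ) := shiftOp (-1) - 1

/-- `H = −x∇`, i.e., `(Hf)(x) = x(f(x) − f(x−1))`. -/
noncomputable def Hdis : Module.End ℂ (Polynomial ℂ) := -(Xop * Nabl)

/-- The falling-factorial polynomial `φ_n(x) = x(x−1)⋯(x−n+1)`. -/
noncomputable def ffact (n : ℕ) : Polynomial ℂ :=
  ∏ s ∈ Finset.range n, (Polynomial.X - Polynomial.C (s : ℂ))

/-- `G = R(H)∘Δ` with `R(H) = ρ·∏_{k=1}^d (H + α_k + 1)`. -/
noncomputable def Gdis (d : ℕ) (α : ℕ → ℂ) (ρ : ℂ) : Module.End ℂ (Polynomial ℂ) :=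
  (Polynomial.aeval Hdis
    (Polynomial.C ρ * ∏ k ∈ Finset.range d, (Polynomial.X + Polynomial.C (α k + 1)))) * Delt

lemma shiftOp_apply (c : ℂ) (f : Polynomial ℂ) : shiftOp c f = f.comp (X + C c) := by
  simp [shiftOp, Polynomial.aeval_def, Polynomial.comp, Polynomial.algebraMap_eq]

lemma shiftOp_shiftOp (c c' : ℂ) (f : Polynomial ℂ) :
    shiftOp c (shiftOp c' f) = shiftOp (c + c') f := by
  show (aeval (X + C c) : Polynomial ℂ →ₐ[ℂ] Polynomial ℂ) (aeval (X + C c') f) = _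
  rw [← Polynomial.aeval_algHom_apply]
  show aeval ((aeval (X + C c) : Polynomial ℂ →ₐ[ℂ] Polynomial ℂ) (X + C c')) f = shiftOp (c + c') f
  rw [map_add, Polynomial.aeval_X, Polynomial.aeval_C]
  show _ = aeval (X + C (c + c')) f
  rw [C_add, add_assoc]
  rfl

lemma shiftOp_C (c a : ℂ) : shiftOp c (C a) = C a := by
  simp [shiftOp]

lemma shiftOp_X_mul (c : ℂ) (f : Polynomial ℂ) :
    shiftOp c (X * f) = (X + C c) * shiftOp c f := by
  show (aeval (X + C c) : Polynomial ℂ →ₐ[ℂ] Polynomial ℂ) (X * f) = _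
  rw [map_mul, Polynomial.aeval_X]
  rfl

lemma degree_shift_sub_lt (c : ℂ) (f : Polynomial ℂ) (hf : f ≠ 0) (h0 : f.natDegree ≠ 0) :
    (shiftOp c f - f).degree < f.degree := by
  rw [shiftOp_apply]
  have hcomp0 : f.comp (X + C c) ≠ 0 := by
    intro h
    rw [Polynomial.comp_eq_zero_iff] at h
    rcases h with h | ⟨_, h⟩
    · exact hf h
    · have := congrArg Polynomial.natDegree h
      simp [Polynomial.natDegree_X_add_C] at this
  have hnd : (f.comp (X + C c)).natDegree = f.natDegree := by
    rw [Polynomial.natDegree_comp]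
    simp [Polynomial.natDegree_X_add_C]
  have hd : (f.comp (X + C c)).degree = f.degree := by
    rw [Polynomial.degree_eq_natDegree hcomp0, Polynomial.degree_eq_natDegree hf, hnd]
  have hlc : (f.comp (X + C c)).leadingCoeff = f.leadingCoeff := by
    rw [Polynomial.leadingCoeff_comp (by simp)]
    simp
  have := Polynomial.degree_sub_lt hd hcomp0 hlc
  rwa [hd] at this

lemma Delt_C (a : ℂ) : Delt (C a) = 0 := by
  simp [Delt, shiftOp_C]

lemma Nabl_C (a : ℂ) : Nabl (C a) = 0 := by
  simp [Nabl, shiftOp_C]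

lemma degree_Delt_lt (f : Polynomial ℂ) (hf : f ≠ 0) : (Delt f).degree < f.degree := by
  by_cases h0 : f.natDegree = 0
  · obtain ⟨a, rfl⟩ := Polynomial.natDegree_eq_zero.mp h0
    rw [Delt_C]
    rw [Polynomial.degree_zero]
    exact Ne.bot_lt (fun h => hf (Polynomial.degree_eq_bot.mp h))
  · simpa [Delt] using degree_shift_sub_lt 1 f hf h0

lemma natDegree_Delt_le (f : Polynomial ℂ) : (Delt f).natDegree ≤ f.natDegree := by
  by_cases hf : f = 0
  · simp [hf]
  by_cases h : Delt f = 0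
  · simp [h]
  exact le_of_lt (Polynomial.natDegree_lt_natDegree h (degree_Delt_lt f hf))

lemma natDegree_H_le (f : Polynomial ℂ) : (Hdis f).natDegree ≤ f.natDegree := by
  by_cases hf : f = 0
  · simp [hf, Hdis]
  by_cases h0 : f.natDegree = 0
  · obtain ⟨a, rfl⟩ := Polynomial.natDegree_eq_zero.mp h0
    simp [Hdis, Nabl_C, Xop]
  have hN : (Nabl f).degree < f.degree := by
    simpa [Nabl] using degree_shift_sub_lt (-1) f hf h0
  by_cases hn : Nabl f = 0
  · simp [Hdis, Xop, hn]
  have : (Nabl f).natDegree < f.natDegree := Polynomial.natDegree_lt_natDegree hn hN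
  have hx : (Hdis f).natDegree = (Nabl f).natDegree + 1 := by
    show (-(Xop (Nabl f))).natDegree = _
    rw [Polynomial.natDegree_neg]
    show (X * Nabl f).natDegree = _
    rw [Polynomial.natDegree_X_mul hn]
  omega

lemma natDegree_aeval_le (T : Module.End ℂ (Polynomial ℂ))
    (hT : ∀ f, (T f).natDegree ≤ f.natDegree) (p : Polynomial ℂ) (f : Polynomial ℂ) :
    ((aeval T p) f).natDegree ≤ f.natDegree := by
  have hpow : ∀ k (f : Polynomial ℂ), ((T ^ k) f).natDegree ≤ f.natDegree := by
    intro k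
    induction k with
    | zero => intro f; simp
    | succ k ih =>
      intro f
      rw [pow_succ, Module.End.mul_apply]
      exact le_trans (ih _) (hT f)
  induction p using Polynomial.induction_on' with
  | add p r hp hr =>
    rw [map_add, LinearMap.add_apply]
    exact le_trans (Polynomial.natDegree_add_le _ _) (max_le hp hr)
  | monomial k c =>
    rw [Polynomial.aeval_monomial]
    have : ((algebraMap ℂ (Module.End ℂ (Polynomial ℂ)) c * T ^ k) f) = c • ((T ^ k) f) := by
      rw [Module.End.mul_apply]
      simp [Algebra.algebraMap_eq_smul_one]
    rw [this]
    exact le_trans (Polynomial.natDegree_smul_le _ _) (hpow k f)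

variable {d : ℕ} {α : ℕ → ℂ} {ρ : ℂ}

lemma natDegree_G_le (f : Polynomial ℂ) : ((Gdis d α ρ) f).natDegree ≤ f.natDegree := by
  rw [Gdis, Module.End.mul_apply]
  exact le_trans (natDegree_aeval_le Hdis natDegree_H_le _ _) (natDegree_Delt_le f)

lemma G_C (a : ℂ) : (Gdis d α ρ) (C a) = 0 := by
  rw [Gdis, Module.End.mul_apply, Delt_C, map_zero]

lemma G_lower (f : Polynomial ℂ) (h0 : f.natDegree ≠ 0) :
    ((Gdis d α ρ) f).natDegree < f.natDegree := by
  have hf : f ≠ 0 := fun h => h0 (by simp [h])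
  by_cases hD : Delt f = 0
  · rw [Gdis, Module.End.mul_apply, hD, map_zero]
    simpa using Nat.pos_of_ne_zero h0
  have h1 : (Delt f).natDegree < f.natDegree :=
    Polynomial.natDegree_lt_natDegree hD (degree_Delt_lt f hf)
  calc ((Gdis d α ρ) f).natDegree ≤ (Delt f).natDegree := by
        rw [Gdis, Module.End.mul_apply]
        exact natDegree_aeval_le Hdis natDegree_H_le _ _
    _ < f.natDegree := h1

lemma qG_lower {q : Polynomial ℂ} (hq : q.eval 0 = 0) (m : ℕ) (f : Polynomial ℂ)
    (hf : f.natDegree ≤ m + 1) : ((aeval (Gdis d α ρ) q) f).natDegree ≤ m := by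
  obtain ⟨r, rfl⟩ : X ∣ q := Polynomial.X_dvd_iff.mpr (by rwa [← Polynomial.coeff_zero_eq_eval_zero] at hq)
  have key : (aeval (Gdis d α ρ) (X * r)) f = (aeval (Gdis d α ρ) r) ((Gdis d α ρ) f) := by
    rw [mul_comm, map_mul, Module.End.mul_apply, Polynomial.aeval_X]
  rw [key]
  by_cases h0 : f.natDegree = 0
  · obtain ⟨a, rfl⟩ := Polynomial.natDegree_eq_zero.mp h0
    rw [G_C, map_zero]
    simp
  have := G_lower (d := d) (α := α) (ρ := ρ) f h0
  have := natDegree_aeval_le (Gdis d α ρ) natDegree_G_le r ((Gdis d α ρ) f)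
  omega

lemma qG_iter {q : Polynomial ℂ} (hq : q.eval 0 = 0) (m : ℕ) (f : Polynomial ℂ)
    (hf : f.natDegree ≤ m) : (((aeval (Gdis d α ρ) q) ^ m) f).natDegree = 0 := by
  induction m generalizing f with
  | zero => simpa using hf
  | succ m ih =>
    rw [pow_succ, Module.End.mul_apply]
    exact ih _ (qG_lower hq m f hf)

lemma shiftOp_zero (f : Polynomial ℂ) : shiftOp 0 f = f := by
  simp [shiftOp]

lemma H_comm_Delt : Hdis * Delt = Delt * Hdis - Delt := by
  apply LinearMap.ext
  intro f
  simp only [Hdis, Delt, Nabl, Xop, Module.End.mul_apply, LinearMap.sub_apply,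
    LinearMap.neg_apply, Module.End.one_apply, LinearMap.mulLeft_apply,
    map_sub, map_neg, shiftOp_X_mul]
  rw [shiftOp_shiftOp, shiftOp_shiftOp]
  norm_num [shiftOp_zero]
  ring

lemma H_comm_RH (r : Polynomial ℂ) : Hdis * aeval Hdis r = aeval Hdis r * Hdis := by
  have : Commute (aeval Hdis X) (aeval Hdis r) := (Commute.all X r).map (aeval Hdis)
  simpa [Polynomial.aeval_X] using this.eq

lemma G_comm (p r : Polynomial ℂ) :
    aeval (Gdis d α ρ) p * aeval (Gdis d α ρ) r = aeval (Gdis d α ρ) r * aeval (Gdis d α ρ) p := by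
  have : Commute (aeval (Gdis d α ρ) p) (aeval (Gdis d α ρ) r) := (Commute.all p r).map _
  exact this.eq

lemma H_comm_G : Hdis * Gdis d α ρ = Gdis d α ρ * Hdis - Gdis d α ρ := by
  rw [Gdis, ← mul_assoc, H_comm_RH, mul_assoc, H_comm_Delt]
  rw [mul_sub, mul_assoc]

lemma H_comm_Gpow (k : ℕ) :
    Hdis * (Gdis d α ρ) ^ k = (Gdis d α ρ) ^ k * Hdis - (k : ℂ) • (Gdis d α ρ) ^ k := by
  induction k with
  | zero => simp
  | succ k ih =>
    rw [pow_succ, ← mul_assoc, ih, sub_mul, mul_assoc, H_comm_G, mul_sub, ← mul_assoc,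
      ← pow_succ, smul_mul_assoc, ← pow_succ]
    push_cast
    rw [add_smul, one_smul]
    abel

lemma H_comm_aevalG (p : Polynomial ℂ) :
    Hdis * aeval (Gdis d α ρ) p =
      aeval (Gdis d α ρ) p * Hdis - Gdis d α ρ * aeval (Gdis d α ρ) (derivative p) := by
  induction p using Polynomial.induction_on' with
  | add p r hp hr =>
    simp only [map_add, derivative_add, mul_add, add_mul, hp, hr]
    abel
  | monomial k c =>
    rw [Polynomial.aeval_monomial, Polynomial.derivative_monomial, Polynomial.aeval_monomial,
      Algebra.algebraMap_eq_smul_one, Algebra.algebraMap_eq_smul_one, smul_one_mul, smul_one_mul,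
      mul_smul_comm, H_comm_Gpow, smul_sub, smul_mul_assoc, mul_smul_comm, smul_smul]
    congr 1
    cases k with
    | zero => simp
    | succ m =>
      simp only [Nat.add_sub_cancel]
      rw [← pow_succ']

lemma ffact_monic (n : ℕ) : (ffact n).Monic :=
  Polynomial.monic_prod_of_monic _ _ (fun s _ => Polynomial.monic_X_sub_C _)

lemma ffact_natDegree (n : ℕ) : (ffact n).natDegree = n := by
  rw [ffact, Polynomial.natDegree_prod]
  · simp only [Polynomial.natDegree_X_sub_C]
    simp
  · intro s _
    exact Polynomial.X_sub_C_ne_zero _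

lemma H_ffact (n : ℕ) : Hdis (ffact n) = (n : ℂ) • ffact n := by
  cases n with
  | zero =>
    have : (ffact 0 : Polynomial ℂ) = C 1 := by simp [ffact]
    rw [this]
    simp only [Hdis, LinearMap.neg_apply, Module.End.mul_apply, Nabl_C, map_zero]
    simp
  | succ m =>
    have key : Hdis (ffact (m+1)) = X * (ffact (m+1) - shiftOp (-1) (ffact (m+1))) := by
      simp only [Hdis, Nabl, Xop, Module.End.mul_apply, LinearMap.sub_apply,
        LinearMap.neg_apply, Module.End.one_apply, LinearMap.mulLeft_apply]
      ring
    have hshift : shiftOp (-1) (ffact (m+1)) = ∏ s ∈ Finset.range (m+1), (X - C ((s:ℂ)+1)) := by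
      show aeval (X + C (-1)) (ffact (m+1)) = _
      rw [ffact, map_prod]
      refine Finset.prod_congr rfl fun s _ => ?_
      rw [map_sub, Polynomial.aeval_X, Polynomial.aeval_C]
      simp only [Polynomial.algebraMap_eq]
      rw [C_add, C_neg, C_1]
      ring
    rw [key, hshift, ffact, Finset.prod_range_succ', Finset.prod_range_succ]
    have hB : ∀ s ∈ Finset.range m, (X - C (((s+1:ℕ)):ℂ)) = X - C ((s:ℂ)+1) := by
      intro s _
      push_cast
      ring
    rw [Finset.prod_congr rfl hB]
    set B := ∏ s ∈ Finset.range m, (X - C ((s:ℂ)+1)) with hBdef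
    rw [Polynomial.smul_eq_C_mul]
    push_cast
    simp only [C_0]
    ring

lemma natDegree_qGpow_le (q : Polynomial ℂ) (k : ℕ) (f : Polynomial ℂ) :
    (((aeval (Gdis d α ρ) q) ^ k) f).natDegree ≤ f.natDegree := by
  induction k generalizing f with
  | zero => simp
  | succ k ih =>
    rw [pow_succ, Module.End.mul_apply]
    exact le_trans (ih _) (natDegree_aeval_le _ natDegree_G_le q f)

lemma H_Tpow (q : Polynomial ℂ) (j : ℕ) :
    Hdis * (aeval (Gdis d α ρ) q) ^ j
      = (aeval (Gdis d α ρ) q) ^ j * Hdis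
        - (j : ℂ) • (Gdis d α ρ * (aeval (Gdis d α ρ) (derivative q)
            * (aeval (Gdis d α ρ) q) ^ (j - 1))) := by
  rw [← map_pow, H_comm_aevalG, Polynomial.derivative_pow, map_mul, map_mul,
    Polynomial.aeval_C, map_pow, ← Algebra.smul_def, smul_mul_assoc, mul_smul_comm]
  congr 2
  rw [← map_pow, G_comm]


/-- `P_n = Σ_{j=0}^n q(G)^j(φ_n)/j!` is monic of degree `n` and is an eigenfunction of
`L = q′(G)∘G − x∇ = q′(G)∘G + H` with eigenvalue `n`. -/
theorem stmt7 (d : ℕ) (α : ℕ → ℂ) (ρ : ℂ) (hρ : ρ ≠ 0)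
    (q : Polynomial ℂ) (hq : q.eval 0 = 0) (n : ℕ) :
    let G := Gdis d α ρ
    let P : Polynomial ℂ := ∑ j ∈ Finset.range (n + 1),
      ((j.factorial : ℂ))⁻¹ • ((Polynomial.aeval G q) ^ j) (ffact n)
    let L := Polynomial.aeval G (Polynomial.derivative q) * G + Hdis
    P.Monic ∧ P.natDegree = n ∧ L P = (n : ℂ) • P := by
  intro G P L
  have hPd : P = ∑ j ∈ Finset.range (n + 1),
      ((j.factorial : ℂ))⁻¹ • ((aeval (Gdis d α ρ) q ^ j) (ffact n)) := rfl
  have hLd : L = aeval (Gdis d α ρ) (derivative q) * Gdis d α ρ + Hdis := rfl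
  have hP : P = (∑ i ∈ Finset.range n,
      (((i+1).factorial : ℂ))⁻¹ • ((aeval (Gdis d α ρ) q ^ (i+1)) (ffact n))) + ffact n := by
    rw [hPd, Finset.sum_range_succ']
    simp
  have hφd : (ffact n).degree = (n : ℕ) := by
    rw [Polynomial.degree_eq_natDegree (ffact_monic n).ne_zero, ffact_natDegree]
  have hdegE : (∑ i ∈ Finset.range n,
      (((i+1).factorial : ℂ))⁻¹ • ((aeval (Gdis d α ρ) q ^ (i+1)) (ffact n))).degree
      < (ffact n).degree := by
    rw [hφd]
    refine lt_of_le_of_lt (Polynomial.degree_sum_le _ _) ?_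
    refine (Finset.sup_lt_iff ?_).mpr ?_
    · exact lt_of_lt_of_le (WithBot.bot_lt_coe 0) (by simp)
    intro i hi
    refine lt_of_le_of_lt (Polynomial.degree_smul_le _ _) ?_
    have hn1 : 1 ≤ n := by
      have := Finset.mem_range.mp hi
      omega
    have h1 : ((aeval (Gdis d α ρ) q) ((ffact n))).natDegree ≤ n - 1 := by
      apply qG_lower hq
      rw [ffact_natDegree]
      omega
    have h2 : ((aeval (Gdis d α ρ) q ^ (i+1)) (ffact n)).natDegree ≤ n - 1 := by
      rw [pow_succ, Module.End.mul_apply]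
      exact le_trans (natDegree_qGpow_le q i _) h1
    by_cases h0 : (aeval (Gdis d α ρ) q ^ (i+1)) (ffact n) = 0
    · rw [h0, Polynomial.degree_zero]
      exact WithBot.bot_lt_coe n
    · exact (Polynomial.natDegree_lt_iff_degree_lt h0).mp (by omega)
  have hmonic : P.Monic := by
    rw [hP]
    exact (ffact_monic n).add_of_right hdegE
  have hdeg : P.natDegree = n := by
    rw [hP]
    have := Polynomial.degree_add_eq_right_of_degree_lt hdegE
    rw [hφd] at this
    exact Polynomial.natDegree_eq_of_degree_eq_some this
  refine ⟨hmonic, hdeg, ?_⟩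
  -- eigenvalue equation
  rw [hLd, hPd]
  have hW : aeval (Gdis d α ρ) (derivative q) * Gdis d α ρ
      = Gdis d α ρ * aeval (Gdis d α ρ) (derivative q) := by
    have := G_comm (d := d) (α := α) (ρ := ρ) (derivative q) X
    simpa [Polynomial.aeval_X] using this
  have hterm : ∀ j : ℕ, Hdis ((aeval (Gdis d α ρ) q ^ j) (ffact n)) =
      (n : ℂ) • (aeval (Gdis d α ρ) q ^ j) (ffact n)
      - (j : ℂ) • (Gdis d α ρ (aeval (Gdis d α ρ) (derivative q)
          ((aeval (Gdis d α ρ) q ^ (j - 1)) (ffact n)))) := by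
    intro j
    have h2 := congrArg (fun A : Module.End ℂ (Polynomial ℂ) => A (ffact n))
      (H_Tpow (d := d) (α := α) (ρ := ρ) q j)
    simp only [Module.End.mul_apply, LinearMap.sub_apply, LinearMap.smul_apply] at h2
    rw [H_ffact, map_smul] at h2
    exact h2
  have hvn : Gdis d α ρ (aeval (Gdis d α ρ) (derivative q)
      ((aeval (Gdis d α ρ) q ^ n) (ffact n))) = 0 := by
    have h1 : ((aeval (Gdis d α ρ) q ^ n) (ffact n)).natDegree = 0 :=
      qG_iter hq n (ffact n) (le_of_eq (ffact_natDegree n))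
    have h2 : (aeval (Gdis d α ρ) (derivative q)
        ((aeval (Gdis d α ρ) q ^ n) (ffact n))).natDegree = 0 :=
      Nat.le_zero.mp (h1 ▸ natDegree_aeval_le _ natDegree_G_le (derivative q) _)
    obtain ⟨a, ha⟩ := Polynomial.natDegree_eq_zero.mp h2
    rw [← ha, G_C]
  have hHP : Hdis (∑ j ∈ Finset.range (n + 1),
      ((j.factorial : ℂ))⁻¹ • ((aeval (Gdis d α ρ) q ^ j) (ffact n)))
      = ∑ j ∈ Finset.range (n + 1), ((j.factorial : ℂ))⁻¹ •
        ((n : ℂ) • (aeval (Gdis d α ρ) q ^ j) (ffact n)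
          - (j : ℂ) • (Gdis d α ρ (aeval (Gdis d α ρ) (derivative q)
              ((aeval (Gdis d α ρ) q ^ (j - 1)) (ffact n))))) := by
    rw [map_sum]
    refine Finset.sum_congr rfl fun j _ => ?_
    rw [map_smul, hterm j]
  have hWP : (aeval (Gdis d α ρ) (derivative q) * Gdis d α ρ) (∑ j ∈ Finset.range (n + 1),
      ((j.factorial : ℂ))⁻¹ • ((aeval (Gdis d α ρ) q ^ j) (ffact n)))
      = ∑ j ∈ Finset.range (n + 1), ((j.factorial : ℂ))⁻¹ •
        (Gdis d α ρ (aeval (Gdis d α ρ) (derivative q)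
            ((aeval (Gdis d α ρ) q ^ j) (ffact n)))) := by
    rw [hW, Module.End.mul_apply, map_sum, map_sum]
    refine Finset.sum_congr rfl fun j _ => ?_
    rw [map_smul, map_smul]
  have hkey : ∑ j ∈ Finset.range (n + 1), ((j.factorial : ℂ))⁻¹ •
        (Gdis d α ρ (aeval (Gdis d α ρ) (derivative q)
            ((aeval (Gdis d α ρ) q ^ j) (ffact n))))
      = ∑ j ∈ Finset.range (n + 1), ((j.factorial : ℂ))⁻¹ • ((j : ℂ) •
        (Gdis d α ρ (aeval (Gdis d α ρ) (derivative q)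
            ((aeval (Gdis d α ρ) q ^ (j - 1)) (ffact n))))) := by
    rw [Finset.sum_range_succ, hvn, smul_zero, add_zero, Finset.sum_range_succ']
    simp only [Nat.cast_zero, zero_smul, smul_zero, add_zero]
    refine Finset.sum_congr rfl fun i _ => ?_
    rw [Nat.add_sub_cancel, smul_smul]
    congr 1
    have h1 : ((i.factorial : ℂ)) ≠ 0 := Nat.cast_ne_zero.mpr (Nat.factorial_ne_zero i)
    have h2 : ((i : ℂ) + 1) ≠ 0 := Nat.cast_add_one_ne_zero i
    rw [Nat.factorial_succ]
    push_cast
    field_simp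
  rw [LinearMap.add_apply, hHP, hWP, hkey, Finset.smul_sum]
  rw [← Finset.sum_add_distrib]
  refine Finset.sum_congr rfl fun j _ => ?_
  rw [smul_sub, smul_comm ((j.factorial : ℂ))⁻¹ (n : ℂ)]
  abel
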